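/- The homomorphism φ maps SL(2,ℂ) onto SO⁺(1,3): for every real 4×4 matrix S with Sᵀ · η · S = η, det S = 1 and S₀₀ > 0, there exists U ∈ SL(2,ℂ) with φ(U) = S. (Surjectivity part of the covering assertion of Theorem 5.3.) -/

import Mathlib

open Matrix Complex

/-- The Minkowski metric matrix `diag(1, -1, -1, -1)`. -/
noncomputable def minkEta : Matrix (Fin 4) (Fin 4) ℝ := Matrix.diagonal ![1, -1, -1, -1]

/-- The map `h : ℝ⁴ → (2×2 complex matrices)`,
`h(w) = [[w⁰+w³, w¹−i·w²],[w¹+i·w², w⁰−w³]]`. -/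
noncomputable def hMat (v : Fin 4 → ℝ) : Matrix (Fin 2) (Fin 2) ℂ :=
  !![(v 0 : ℂ) + (v 3 : ℂ), (v 1 : ℂ) - Complex.I * (v 2 : ℂ);
     (v 1 : ℂ) + Complex.I * (v 2 : ℂ), (v 0 : ℂ) - (v 3 : ℂ)]

/-- The map `w` taking a 2×2 complex matrix `A` to the 4-tuple
`((A₁₁+A₂₂)/2, (A₁₂+A₂₁)/2, (i·A₁₂ − i·A₂₁)/2, (A₁₁−A₂₂)/2)`. -/
noncomputable def wComp (A : Matrix (Fin 2) (Fin 2) ℂ) : Fin 4 → ℂ :=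
  ![(A 0 0 + A 1 1) / 2, (A 0 1 + A 1 0) / 2,
    (Complex.I * A 0 1 - Complex.I * A 1 0) / 2, (A 0 0 - A 1 1) / 2]

/-!
`hMat` identifies `ℝ⁴` with the Hermitian `2 × 2` matrices and turns the Minkowski form into the
determinant, so `X ↦ U X Uᴴ` induces a Lorentz matrix `φ(U)` for `U ∈ SL(2,ℂ)`. Its determinant
is `1`: it is `±1`, and `φ(U) = φ(Q)²` for a square root `Q = (1 + U) / √(2 + tr U)` of `U` or of
`-U`, which induce the same map.

For surjectivity, `S` is multiplied on the left by images `φ(U)⁻¹ = φ(U⁻¹)` so as to fix, one at a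
time, `e₀` (`U` the positive square root of `hMat (S e₀)`, a boost), `e₃` (`U ∈ SU(2)` obtained
from a preimage of `S e₃` under the Hopf map) and `e₁` (`U` diagonal in `SU(2)`). A proper Lorentz
matrix fixing `e₀`, `e₁` and `e₃` is the identity.
-/

open ComplexConjugate

noncomputable abbrev minkQ : QuadraticForm ℝ (Fin 4 → ℝ) := minkEta.toQuadraticForm'

lemma minkQ_apply (v : Fin 4 → ℝ) : minkQ v = v 0 ^ 2 - v 1 ^ 2 - v 2 ^ 2 - v 3 ^ 2 := by
  simp [toQuadraticForm', toLinearMap₂'_apply', minkEta, dotProduct, Fin.sum_univ_four,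
    mulVec_diagonal]
  ring

lemma minkEta_isSymm : minkEta.IsSymm := by
  simp [minkEta, IsSymm]

lemma Matrix.IsSymm.transpose_toMatrix'_mul_mul_eq {R n : Type*} [CommRing R]
    [Invertible (2 : R)] [Fintype n] [DecidableEq n] {M : Matrix n n R} (hM : M.IsSymm)
    {f : (n → R) →ₗ[R] n → R} (hf : ∀ v, M.toQuadraticForm' (f v) = M.toQuadraticForm' v) :
    (LinearMap.toMatrix' f)ᵀ * M * LinearMap.toMatrix' f = M := by
  have hQ : M.toQuadraticForm'.toMatrix' = M := by
    rw [QuadraticForm.toMatrix', toQuadraticForm', QuadraticMap.associated_left_inverse,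
      LinearMap.toMatrix'_toLinearMap₂']
    intro x y
    rw [toLinearMap₂'_apply', toLinearMap₂'_apply', dotProduct_mulVec, ← mulVec_transpose, hM.eq,
      dotProduct_comm]
  have hcomp : M.toQuadraticForm'.comp f = M.toQuadraticForm' := QuadraticMap.ext hf
  calc (LinearMap.toMatrix' f)ᵀ * M * LinearMap.toMatrix' f
      = QuadraticForm.toMatrix' (M.toQuadraticForm'.comp f) := by
        rw [QuadraticForm.toMatrix'_comp, hQ]
    _ = M := by rw [hcomp, hQ]

section hMat

lemma hMat_add (v w : Fin 4 → ℝ) : hMat (v + w) = hMat v + hMat w := by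
  ext i j
  fin_cases i <;> fin_cases j <;> simp [hMat] <;> ring

lemma hMat_smul (a : ℝ) (v : Fin 4 → ℝ) : hMat (a • v) = (a : ℂ) • hMat v := by
  ext i j
  fin_cases i <;> fin_cases j <;> simp [hMat] <;> ring

lemma wComp_hMat (v : Fin 4 → ℝ) : wComp (hMat v) = fun i => (v i : ℂ) := by
  ext i
  fin_cases i <;> simp [wComp, hMat]
  all_goals ring_nf; simp [I_sq]

lemma hMat_injective : Function.Injective hMat := fun v w h => by
  have := congrArg wComp h
  simp only [wComp_hMat, funext_iff, ofReal_inj] at this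
  exact funext this

lemma isHermitian_hMat (v : Fin 4 → ℝ) : (hMat v).IsHermitian := by
  ext i j
  fin_cases i <;> fin_cases j <;> simp [hMat, conjTranspose_apply]
  ring

lemma hMat_re_wComp {X : Matrix (Fin 2) (Fin 2) ℂ} (hX : X.IsHermitian) :
    hMat (fun i => (wComp X i).re) = X := by
  have h00 := Complex.ext_iff.mp (hX.apply 0 0)
  have h11 := Complex.ext_iff.mp (hX.apply 1 1)
  have h01 := Complex.ext_iff.mp (hX.apply 0 1)
  simp only [RCLike.star_def, conj_re, conj_im] at h00 h11 h01
  ext i j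
  fin_cases i <;> fin_cases j <;> apply Complex.ext <;> simp [hMat, wComp] <;> linarith

lemma det_hMat (v : Fin 4 → ℝ) : (hMat v).det = minkQ v := by
  rw [minkQ_apply, hMat, det_fin_two_of]
  push_cast
  linear_combination (v 2 : ℂ) ^ 2 * I_sq

lemma hMat_single_zero : hMat (Pi.single 0 1) = 1 := by
  ext i j
  fin_cases i <;> fin_cases j <;> simp [hMat]

end hMat

noncomputable def spinAction (U : Matrix (Fin 2) (Fin 2) ℂ) : (Fin 4 → ℝ) →ₗ[ℝ] Fin 4 → ℝ where
  toFun v i := (wComp (U * hMat v * Uᴴ) i).re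
  map_add' v w := by
    ext i
    fin_cases i <;> simp [hMat_add, mul_add, add_mul, wComp] <;> ring
  map_smul' a v := by
    ext i
    fin_cases i <;> simp [hMat_smul, wComp] <;> ring

noncomputable def phi (U : Matrix (Fin 2) (Fin 2) ℂ) : Matrix (Fin 4) (Fin 4) ℝ :=
  LinearMap.toMatrix' (spinAction U)

section phi

variable (U V : Matrix (Fin 2) (Fin 2) ℂ)

lemma hMat_phi_mulVec (v : Fin 4 → ℝ) : hMat (phi U *ᵥ v) = U * hMat v * Uᴴ := by
  rw [phi, LinearMap.toMatrix'_mulVec]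
  exact hMat_re_wComp (isHermitian_mul_mul_conjTranspose U (isHermitian_hMat v))

lemma phi_mulVec_eq_iff {v w : Fin 4 → ℝ} : phi U *ᵥ v = w ↔ U * hMat v * Uᴴ = hMat w := by
  rw [← hMat_phi_mulVec, hMat_injective.eq_iff]

lemma phi_mulVec_single_zero_iff : phi U *ᵥ Pi.single 0 1 = Pi.single 0 1 ↔ U * Uᴴ = 1 := by
  rw [phi_mulVec_eq_iff, hMat_single_zero, Matrix.mul_one]

lemma phi_mul : phi (U * V) = phi U * phi V := by
  refine ext_iff_mulVec.mpr fun v => ?_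
  rw [← mulVec_mulVec, phi_mulVec_eq_iff, hMat_phi_mulVec, hMat_phi_mulVec, conjTranspose_mul]
  simp only [Matrix.mul_assoc]

lemma phi_one : phi 1 = 1 :=
  ext_iff_mulVec.mpr fun v => by simp [phi_mulVec_eq_iff]

lemma phi_neg : phi (-U) = phi U :=
  ext_iff_mulVec.mpr fun v => by simp [phi_mulVec_eq_iff, hMat_phi_mulVec]

variable {U}

lemma minkQ_phi_mulVec (hU : U.det = 1) (v : Fin 4 → ℝ) : minkQ (phi U *ᵥ v) = minkQ v := by
  apply ofReal_injective
  rw [← det_hMat, ← det_hMat, hMat_phi_mulVec, det_mul, det_mul, det_conjTranspose, hU]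
  simp

lemma phi_lorentz (hU : U.det = 1) : (phi U)ᵀ * minkEta * phi U = minkEta :=
  minkEta_isSymm.transpose_toMatrix'_mul_mul_eq fun v => by
    simpa [phi] using minkQ_phi_mulVec hU v

end phi

lemma det_sq_eq_one_of_lorentz {S : Matrix (Fin 4) (Fin 4) ℝ}
    (hS : Sᵀ * minkEta * S = minkEta) : S.det ^ 2 = 1 := by
  have h := congrArg det hS
  have hη : minkEta.det = -1 := by simp [minkEta, Fin.prod_univ_four]
  rw [det_mul, det_mul, det_transpose, hη] at h
  linear_combination -h

section FinTwo

lemma Matrix.det_one_add_fin_two {R : Type*} [CommRing R] (U : Matrix (Fin 2) (Fin 2) R) :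
    (1 + U).det = 1 + U.trace + U.det := by
  simp [det_fin_two, trace_fin_two]
  ring

lemma Matrix.one_add_mul_self_fin_two {R : Type*} [CommRing R] {U : Matrix (Fin 2) (Fin 2) R}
    (hU : U.det = 1) : (1 + U) * (1 + U) = (2 + U.trace) • U := by
  rw [det_fin_two] at hU
  ext i j
  fin_cases i <;> fin_cases j <;> simp [mul_apply, trace_fin_two] <;>
    first | ring1 | linear_combination -hU

variable {K : Type*} [Field K] {U : Matrix (Fin 2) (Fin 2) K}

lemma Matrix.smul_one_add_mul_self_fin_two (hU : U.det = 1) {c : K} (hc : c ^ 2 = 2 + U.trace)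
    (hc0 : c ≠ 0) : (c⁻¹ • (1 + U)) * (c⁻¹ • (1 + U)) = U := by
  rw [Matrix.smul_mul, Matrix.mul_smul, smul_smul, one_add_mul_self_fin_two hU, smul_smul, ← hc]
  field_simp
  simp

lemma Matrix.det_smul_one_add_fin_two (hU : U.det = 1) {c : K} (hc : c ^ 2 = 2 + U.trace)
    (hc0 : c ≠ 0) : (c⁻¹ • (1 + U)).det = 1 := by
  rw [det_smul, det_one_add_fin_two, hU, Fintype.card_fin]
  field_simp
  linear_combination -hc

lemma Matrix.exists_mul_self_eq_fin_two [IsAlgClosed K] (hU : U.det = 1) (htr : U.trace ≠ -2) :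
    ∃ Q : Matrix (Fin 2) (Fin 2) K, Q.det = 1 ∧ Q * Q = U := by
  obtain ⟨c, hc⟩ := IsAlgClosed.exists_pow_nat_eq (2 + U.trace) two_pos
  have hc0 : c ≠ 0 := by
    rintro rfl
    exact htr (by linear_combination -hc)
  exact ⟨_, det_smul_one_add_fin_two hU hc hc0, smul_one_add_mul_self_fin_two hU hc hc0⟩

end FinTwo

lemma det_phi {U : Matrix (Fin 2) (Fin 2) ℂ} (hU : U.det = 1) : (phi U).det = 1 := by
  have of_trace_ne : ∀ W : Matrix (Fin 2) (Fin 2) ℂ, W.det = 1 → W.trace ≠ -2 →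
      (phi W).det = 1 := by
    intro W hW htr
    obtain ⟨Q, hQ, rfl⟩ := exists_mul_self_eq_fin_two hW htr
    rw [phi_mul, det_mul, ← sq, det_sq_eq_one_of_lorentz (phi_lorentz hQ)]
  by_cases htr : U.trace = -2
  · rw [← phi_neg]
    exact of_trace_ne _ (by simp [det_neg, hU]) (by rw [trace_neg, htr]; norm_num)
  · exact of_trace_ne U hU htr

def properLorentz : Submonoid (Matrix (Fin 4) (Fin 4) ℝ) where
  carrier := {S | Sᵀ * minkEta * S = minkEta ∧ S.det = 1}
  mul_mem' := by
    rintro S T ⟨hS, hSdet⟩ ⟨hT, hTdet⟩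
    refine ⟨?_, by rw [det_mul, hSdet, hTdet, one_mul]⟩
    rw [transpose_mul, show Tᵀ * Sᵀ * minkEta * (S * T) = Tᵀ * (Sᵀ * minkEta * S) * T by
      simp only [Matrix.mul_assoc], hS, hT]
  one_mem' := by simp

noncomputable def phiHom : SpecialLinearGroup (Fin 2) ℂ →* Matrix (Fin 4) (Fin 4) ℝ where
  toFun U := phi U
  map_one' := phi_one
  map_mul' U V := phi_mul U V

lemma phiHom_apply (U : SpecialLinearGroup (Fin 2) ℂ) : phiHom U = phi U := rfl

lemma phiHom_mem_properLorentz (U : SpecialLinearGroup (Fin 2) ℂ) : phiHom U ∈ properLorentz :=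
  ⟨phi_lorentz U.2, det_phi U.2⟩

section Lorentz

variable {S : Matrix (Fin 4) (Fin 4) ℝ}

lemma minkQ_mulVec (hS : Sᵀ * minkEta * S = minkEta) (v : Fin 4 → ℝ) :
    minkQ (S *ᵥ v) = minkQ v := by
  simp only [toQuadraticForm', LinearMap.BilinMap.toQuadraticMap_apply, toLinearMap₂'_apply']
  conv_rhs => rw [← hS]
  rw [← mulVec_mulVec, ← mulVec_mulVec, dotProduct_mulVec v Sᵀ, vecMul_transpose]

lemma row_eq_single_of_mulVec_single (hS : Sᵀ * minkEta * S = minkEta) {k : Fin 4}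
    (hk : S *ᵥ Pi.single k 1 = Pi.single k 1) : S k = Pi.single k 1 := by
  have h := congrArg (Pi.single k 1 ᵥ* ·) hS
  simp only [← vecMul_vecMul, vecMul_transpose, hk] at h
  simp only [minkEta, single_vecMul, row_diagonal, one_smul] at h
  have hk0 : (![1, -1, -1, -1] : Fin 4 → ℝ) k ≠ 0 := by fin_cases k <;> norm_num
  funext j
  have hj := congrFun h j
  by_cases hjk : j = k
  · subst hjk
    simpa [hk0] using hj
  · simpa [hjk, hk0] using hj

lemma eq_one_of_mulVec_single (hS : S ∈ properLorentz) (j : Fin 4)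
    (h : ∀ k ≠ j, S *ᵥ Pi.single k 1 = Pi.single k 1) : S = 1 := by
  obtain ⟨hL, hdet⟩ := hS
  have hcol : ∀ i, ∀ k ≠ j, S i k = (1 : Matrix (Fin 4) (Fin 4) ℝ) i k := fun i k hk => by
    simpa [mulVec_single_one, one_apply, Pi.single_apply, eq_comm] using congrFun (h k hk) i
  have hrow : ∀ k ≠ j, ∀ i, S k i = (1 : Matrix (Fin 4) (Fin 4) ℝ) k i := fun k hk i => by
    simpa [one_apply, Pi.single_apply, eq_comm] using
      congrFun (row_eq_single_of_mulVec_single hL (h k hk)) i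
  have hdiag : S = diagonal (Function.update 1 j (S j j)) := by
    ext a b
    by_cases ha : a = j
    · subst ha
      by_cases hb : b = a
      · subst hb
        simp
      · simp [hcol a b hb, Ne.symm hb]
    · simp [hrow a ha, one_apply, diagonal_apply, ha]
  have hjj : S j j = 1 := by
    rw [hdiag, det_diagonal, Finset.prod_update_of_mem (Finset.mem_univ j)] at hdet
    simpa using hdet
  rw [hdiag, hjj]
  simp

end Lorentz

/-- The Cayley–Klein parametrisation of `SU(2)`. -/
def su2Mat (a b : ℂ) : Matrix (Fin 2) (Fin 2) ℂ := !![a, -conj b; b, conj a]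

section su2Mat

variable (a b : ℂ)

lemma det_su2Mat : (su2Mat a b).det = (normSq a + normSq b : ℝ) := by
  simp [su2Mat, det_fin_two_of, mul_conj, ← normSq_eq_conj_mul_self]

lemma su2Mat_mul_conjTranspose :
    su2Mat a b * (su2Mat a b)ᴴ = ((normSq a + normSq b : ℝ) : ℂ) • 1 := by
  ext i j
  fin_cases i <;> fin_cases j <;> simp [su2Mat, mul_apply, mul_conj, mul_comm b] <;> ring

lemma su2Mat_mul_hMat_single_three :
    su2Mat a b * hMat (Pi.single 3 1) * (su2Mat a b)ᴴ =
      hMat ![0, (2 * (conj a * b)).re, (2 * (conj a * b)).im, normSq a - normSq b] := by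
  ext i j
  fin_cases i <;> fin_cases j <;> apply Complex.ext <;>
    simp [su2Mat, hMat, mul_apply, normSq_apply] <;> ring

lemma su2Mat_zero_mul_hMat_single_one :
    su2Mat a 0 * hMat (Pi.single 1 1) * (su2Mat a 0)ᴴ = hMat ![0, (a ^ 2).re, -(a ^ 2).im, 0] := by
  ext i j
  fin_cases i <;> fin_cases j <;> apply Complex.ext <;> simp [su2Mat, hMat, mul_apply, sq]
  ring

def su2 (hab : normSq a + normSq b = 1) : SpecialLinearGroup (Fin 2) ℂ :=
  ⟨su2Mat a b, by rw [det_su2Mat, hab, ofReal_one]⟩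

variable {a b}

lemma phiHom_su2_mulVec_single_zero (hab : normSq a + normSq b = 1) :
    phiHom (su2 a b hab) *ᵥ Pi.single 0 1 = Pi.single 0 1 := by
  rw [phiHom_apply, phi_mulVec_single_zero_iff]
  simp [su2, su2Mat_mul_conjTranspose, hab]

end su2Mat

/-- `(a, b) ↦ (2 ā b, |a|² - |b|²)` is the Hopf map `S³ → S²`. -/
lemma exists_hopf_preimage {x : ℂ} {t : ℝ} (h : normSq x + t ^ 2 = 1) :
    ∃ a b : ℂ, normSq a + normSq b = 1 ∧ 2 * (conj a * b) = x ∧ normSq a - normSq b = t := by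
  by_cases ht : t = -1
  · subst ht
    have hx : x = 0 := by rw [← normSq_eq_zero]; linarith
    exact ⟨0, 1, by simp, by simp [hx], by simp⟩
  have ht' : 0 < 1 + t := by
    have : -1 ≤ t := by nlinarith [normSq_nonneg x]
    linarith [lt_of_le_of_ne this (Ne.symm ht)]
  obtain ⟨s, hs, hs0⟩ : ∃ s : ℝ, s ^ 2 = 2 + 2 * t ∧ s ≠ 0 :=
    ⟨_, Real.sq_sqrt (by linarith), (Real.sqrt_pos.mpr (by linarith)).ne'⟩
  refine ⟨((1 + t) / s : ℝ), x / s, ?_, ?_, ?_⟩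
  · rw [normSq_ofReal, normSq_div, normSq_ofReal]
    field_simp
    linear_combination h - hs
  · have hsC : (s : ℂ) ^ 2 = 2 + 2 * t := by exact_mod_cast hs
    have hsC0 : (s : ℂ) ≠ 0 := by exact_mod_cast hs0
    rw [conj_ofReal]
    push_cast
    field_simp
    linear_combination -x * hsC
  · rw [normSq_ofReal, normSq_div, normSq_ofReal]
    field_simp
    linear_combination -h - t * hs

lemma exists_phiHom_mulVec_single_zero {u : Fin 4 → ℝ} (hu : minkQ u = 1) (hu0 : 0 < u 0) :
    ∃ P : SpecialLinearGroup (Fin 2) ℂ, phiHom P *ᵥ Pi.single 0 1 = u := by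
  have hH : (hMat u).det = 1 := by rw [det_hMat, hu, ofReal_one]
  have htr : (hMat u).trace = 2 * u 0 := by
    simp [hMat, trace_fin_two]
    ring
  obtain ⟨c, hc, hc0⟩ : ∃ c : ℝ, c ^ 2 = 2 + 2 * u 0 ∧ c ≠ 0 :=
    ⟨_, Real.sq_sqrt (by linarith), (Real.sqrt_pos.mpr (by linarith)).ne'⟩
  have hcC : (c : ℂ) ^ 2 = 2 + (hMat u).trace := by rw [htr]; exact_mod_cast hc
  have hcC0 : (c : ℂ) ≠ 0 := by exact_mod_cast hc0
  refine ⟨⟨(c : ℂ)⁻¹ • (1 + hMat u), det_smul_one_add_fin_two hH hcC hcC0⟩, ?_⟩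
  have hherm : ((c : ℂ)⁻¹ • (1 + hMat u))ᴴ = (c : ℂ)⁻¹ • (1 + hMat u) := by
    simp [conjTranspose_smul, (isHermitian_hMat u).eq]
  change phi _ *ᵥ _ = u
  rw [phi_mulVec_eq_iff, hMat_single_zero, Matrix.mul_one, hherm]
  exact smul_one_add_mul_self_fin_two hH hcC hcC0

lemma exists_phiHom_mulVec_single_three {c : Fin 4 → ℝ} (hc0 : c 0 = 0) (hc : minkQ c = -1) :
    ∃ V : SpecialLinearGroup (Fin 2) ℂ,
      phiHom V *ᵥ Pi.single 0 1 = Pi.single 0 1 ∧ phiHom V *ᵥ Pi.single 3 1 = c := by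
  rw [minkQ_apply, hc0] at hc
  obtain ⟨a, b, hab, hx, ht⟩ :=
    exists_hopf_preimage (x := ⟨c 1, c 2⟩) (t := c 3) (by rw [normSq_mk]; linarith)
  refine ⟨su2 a b hab, phiHom_su2_mulVec_single_zero hab, ?_⟩
  rw [phiHom_apply, phi_mulVec_eq_iff]
  simp only [su2, su2Mat_mul_hMat_single_three, hx, ht]
  congr 1
  ext i
  fin_cases i <;> simp [hc0]

lemma exists_phiHom_mulVec_single_one {d : Fin 4 → ℝ} (hd0 : d 0 = 0) (hd3 : d 3 = 0)
    (hd : minkQ d = -1) :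
    ∃ D : SpecialLinearGroup (Fin 2) ℂ, phiHom D *ᵥ Pi.single 0 1 = Pi.single 0 1 ∧
      phiHom D *ᵥ Pi.single 3 1 = Pi.single 3 1 ∧ phiHom D *ᵥ Pi.single 1 1 = d := by
  rw [minkQ_apply, hd0, hd3] at hd
  obtain ⟨a, ha⟩ := IsAlgClosed.exists_pow_nat_eq (⟨d 1, -d 2⟩ : ℂ) two_pos
  have hna : normSq a = 1 := by
    refine (pow_eq_one_iff_of_nonneg (normSq_nonneg a) two_ne_zero).mp ?_
    rw [← map_pow, ha, normSq_mk]
    linarith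
  have hab : normSq a + normSq 0 = 1 := by simp [hna]
  refine ⟨su2 a 0 hab, phiHom_su2_mulVec_single_zero hab, ?_, ?_⟩
  · rw [phiHom_apply, phi_mulVec_eq_iff]
    simp only [su2, su2Mat_mul_hMat_single_three]
    congr 1
    ext i
    fin_cases i <;> simp [hna]
  · rw [phiHom_apply, phi_mulVec_eq_iff]
    simp only [su2, su2Mat_zero_mul_hMat_single_one, ha]
    congr 1
    ext i
    fin_cases i <;> simp [hd0, hd3]

section Reduction

variable {S : Matrix (Fin 4) (Fin 4) ℝ}

lemma mem_mrange_of_phiHom_inv_mul (U : SpecialLinearGroup (Fin 2) ℂ)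
    (h : phiHom U⁻¹ * S ∈ MonoidHom.mrange phiHom) : S ∈ MonoidHom.mrange phiHom := by
  have hS : S = phiHom U * (phiHom U⁻¹ * S) := by
    rw [← mul_assoc, ← map_mul, mul_inv_cancel, map_one, one_mul]
  rw [hS]
  exact mul_mem ⟨U, rfl⟩ h

lemma phiHom_inv_mul_mulVec {U : SpecialLinearGroup (Fin 2) ℂ} {v : Fin 4 → ℝ}
    (h : phiHom U *ᵥ v = S *ᵥ v) : (phiHom U⁻¹ * S) *ᵥ v = v := by
  rw [← mulVec_mulVec, ← h, mulVec_mulVec, ← map_mul, inv_mul_cancel, map_one, one_mulVec]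

lemma mem_mrange_of_mulVec_single_zero_three (hS : S ∈ properLorentz)
    (h0 : S *ᵥ Pi.single 0 1 = Pi.single 0 1) (h3 : S *ᵥ Pi.single 3 1 = Pi.single 3 1) :
    S ∈ MonoidHom.mrange phiHom := by
  have hrow0 := row_eq_single_of_mulVec_single hS.1 h0
  have hrow3 := row_eq_single_of_mulVec_single hS.1 h3
  obtain ⟨D, hD0, hD3, hD1⟩ := exists_phiHom_mulVec_single_one (d := S *ᵥ Pi.single 1 1)
    (by simp [hrow0]) (by simp [hrow3]) (by rw [minkQ_mulVec hS.1, minkQ_apply]; simp)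
  refine mem_mrange_of_phiHom_inv_mul D ?_
  rw [eq_one_of_mulVec_single (mul_mem (phiHom_mem_properLorentz _) hS) 2 ?_]
  · exact one_mem _
  intro k hk
  fin_cases k
  · exact phiHom_inv_mul_mulVec (hD0.trans h0.symm)
  · exact phiHom_inv_mul_mulVec hD1
  · exact absurd rfl hk
  · exact phiHom_inv_mul_mulVec (hD3.trans h3.symm)

lemma mem_mrange_of_mulVec_single_zero (hS : S ∈ properLorentz)
    (h0 : S *ᵥ Pi.single 0 1 = Pi.single 0 1) : S ∈ MonoidHom.mrange phiHom := by
  have hrow0 := row_eq_single_of_mulVec_single hS.1 h0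
  obtain ⟨V, hV0, hV3⟩ := exists_phiHom_mulVec_single_three (c := S *ᵥ Pi.single 3 1)
    (by simp [hrow0]) (by rw [minkQ_mulVec hS.1, minkQ_apply]; simp)
  exact mem_mrange_of_phiHom_inv_mul V <| mem_mrange_of_mulVec_single_zero_three
    (mul_mem (phiHom_mem_properLorentz _) hS) (phiHom_inv_mul_mulVec (hV0.trans h0.symm))
    (phiHom_inv_mul_mulVec hV3)

end Reduction

/-- **Surjectivity of `φ : SL(2,ℂ) → SO⁺(1,3)`** (part of Theorem 5.3): every real 4×4
matrix `S` with `Sᵀ ⬝ η ⬝ S = η`, `det S = 1` and `S₀₀ > 0` is of the form `φ(U)` for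
some `U ∈ SL(2,ℂ)`. -/
theorem phi_surjective
    (S : Matrix (Fin 4) (Fin 4) ℝ)
    (hL : Sᵀ * minkEta * S = minkEta) (hdet : S.det = 1) (hpos : 0 < S 0 0) :
    ∃ U : Matrix (Fin 2) (Fin 2) ℂ, U.det = 1 ∧
      ∀ v : Fin 4 → ℝ, hMat (S.mulVec v) = U * hMat v * Uᴴ := by
  have hS : S ∈ properLorentz := ⟨hL, hdet⟩
  obtain ⟨P, hP⟩ := exists_phiHom_mulVec_single_zero (u := S *ᵥ Pi.single 0 1)
    (by rw [minkQ_mulVec hL, minkQ_apply]; simp) (by simpa [mulVec_single_one] using hpos)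
  obtain ⟨U, hU⟩ := mem_mrange_of_phiHom_inv_mul P <| mem_mrange_of_mulVec_single_zero
    (mul_mem (phiHom_mem_properLorentz _) hS) (phiHom_inv_mul_mulVec hP)
  exact ⟨U, U.2, fun v => by rw [← hU, phiHom_apply, hMat_phi_mulVec]⟩
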